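/- Under Condition A, let (f_i)_{i∈ℕ} be a real sequence with Σ_{i=0}^∞ f_i² / |‖G_i^{(β,α−β)}‖|² < ∞, and set λ_i := −c** · Γ(i+1+α)/Γ(i+1) and c_i := f_i / ( λ_i · |‖G_i^{(β,α−β)}‖|² ). Then Σ_{i=1}^∞ i² · c_{i−1}² · |‖G_i^{(α−β−1,β−1)}‖|² < ∞. (This summability expresses that the derivative Du of the spectral solution u = ρ^{(α−β,β)} Σ_i c_i G_i^{(α−β,β)} belongs to L²_{ρ^{(−(α−β)+1,−β+1)}}(0,1).) -/

import Mathlib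

open Real

/-- Squared weighted `L²` norm of the Jacobi polynomial `G_j^{(a,b)}` on `(0,1)`. -/
noncomputable def normG2 (a b : ℝ) (j : ℕ) : ℝ :=
  Real.Gamma ((j : ℝ) + a + 1) * Real.Gamma ((j : ℝ) + b + 1) /
    ((2 * (j : ℝ) + a + b + 1) * Real.Gamma ((j : ℝ) + 1) * Real.Gamma ((j : ℝ) + a + b + 1))

/-! The estimate reduces to two facts. Lowering both Jacobi parameters and raising the degree
changes the squared norm by an explicit rational factor,
`(j+1) ‖G_{j+1}^{(b-1,a-1)}‖² = (j+a+b) ‖G_j^{(a,b)}‖²`, so the `i`-th term of the series is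
`(i+1)(i+α)/λ_i² · f_i²/‖G_i‖²`. Since `Γ` increases on `[2, ∞)` and `α ≥ 1`,
`Γ(i+1+α)/Γ(i+1) ≥ Γ(i+2)/Γ(i+1) = i+1`, so the factor in front is at most `α/c**²`,
and the series is dominated by a multiple of the assumed convergent one. -/

theorem normG2_comm (a b : ℝ) (j : ℕ) : normG2 a b j = normG2 b a j := by
  unfold normG2
  ring_nf

theorem succ_mul_normG2_sub_one_succ (a b : ℝ) (j : ℕ) :
    ((j : ℝ) + 1) * normG2 (a - 1) (b - 1) (j + 1) = ((j : ℝ) + a + b) * normG2 a b j := by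
  unfold normG2
  push_cast
  have hGamma_succ : Gamma ((j : ℝ) + 1 + 1) = ((j : ℝ) + 1) * Gamma ((j : ℝ) + 1) :=
    Gamma_add_one (by positivity)
  rw [show (j : ℝ) + 1 + (a - 1) + 1 = j + a + 1 by ring,
    show (j : ℝ) + 1 + (b - 1) + 1 = j + b + 1 by ring,
    show 2 * ((j : ℝ) + 1) + (a - 1) + (b - 1) + 1 = 2 * j + a + b + 1 by ring,
    show (j : ℝ) + 1 + (a - 1) + (b - 1) + 1 = j + a + b by ring, hGamma_succ]
  rcases eq_or_ne ((j : ℝ) + a + b) 0 with hzero | hne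
  · -- `Gamma 0 = 0`, so both sides vanish
    rw [hzero]
    simp
  · rw [Gamma_add_one hne]
    field_simp

theorem add_one_le_Gamma_add_div_Gamma {x α : ℝ} (hx : 0 ≤ x) (hα : 1 ≤ α) :
    x + 1 ≤ Gamma (x + 1 + α) / Gamma (x + 1) := by
  have hmono : Gamma (x + 1 + 1) ≤ Gamma (x + 1 + α) :=
    Gamma_strictMonoOn_Ici.monotoneOn (Set.mem_Ici.2 (by linarith))
      (Set.mem_Ici.2 (by linarith)) (by linarith)
  rw [Gamma_add_one (by positivity)] at hmono
  rw [le_div_iff₀ (Gamma_pos_of_pos (by positivity))]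
  exact hmono

theorem sq_div_mul_mul_self (y l N : ℝ) :
    (y / (l * N)) ^ 2 * N = y ^ 2 / N / l ^ 2 := by
  rcases eq_or_ne N 0 with rfl | hN
  · simp
  · rcases eq_or_ne l 0 with rfl | hl
    · simp
    · field_simp

theorem succ_sq_mul_sq_div_mul_normG2 (a b y l : ℝ) (j : ℕ) :
    ((j : ℝ) + 1) ^ 2 * (y / (l * normG2 a b j)) ^ 2 * normG2 (b - 1) (a - 1) (j + 1)
      = ((j : ℝ) + 1) * (j + a + b) / l ^ 2 * (y ^ 2 / normG2 a b j) := by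
  rw [normG2_comm (b - 1)]
  linear_combination ((j + 1) * (y / (l * normG2 a b j)) ^ 2) * succ_mul_normG2_sub_one_succ a b j
    + ((j + 1) * (j + a + b)) * sq_div_mul_mul_self y l (normG2 a b j)

theorem mul_add_div_sq_le {x α k r : ℝ} (hx : 0 ≤ x) (hα : 1 ≤ α) (hr : x + 1 ≤ r) :
    (x + 1) * (x + α) / (k * r) ^ 2 ≤ α / k ^ 2 := by
  rw [mul_pow, mul_comm (k ^ 2), ← div_div]
  refine div_le_div_of_nonneg_right ?_ (sq_nonneg k)
  calc (x + 1) * (x + α) / r ^ 2 ≤ (x + 1) * (x + α) / (x + 1) ^ 2 := by gcongr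
    _ = (x + α) / (x + 1) := by field_simp
    _ ≤ α := by rw [div_le_iff₀ (by linarith)]; nlinarith

theorem stmt13_general (α β css : ℝ)
    (hα₁ : 1 < α)
    (f lam c : ℕ → ℝ)
    (hlam : ∀ i : ℕ, lam i = -css * (Real.Gamma ((i : ℝ) + 1 + α) / Real.Gamma ((i : ℝ) + 1)))
    (hc : ∀ i : ℕ, c i = f i / (lam i * normG2 β (α - β) i))
    (hf : Summable fun i : ℕ => (f i) ^ 2 / normG2 β (α - β) i) :
    Summable fun i : ℕ =>
      ((i : ℝ) + 1) ^ 2 * (c i) ^ 2 * normG2 (α - β - 1) (β - 1) (i + 1) := by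
  refine .of_norm_bounded ((summable_abs_iff.2 hf).mul_left (α / css ^ 2)) fun i => ?_
  have hterm : ((i : ℝ) + 1) ^ 2 * (c i) ^ 2 * normG2 (α - β - 1) (β - 1) (i + 1)
      = ((i : ℝ) + 1) * (i + α) / lam i ^ 2 * ((f i) ^ 2 / normG2 β (α - β) i) := by
    rw [hc, succ_sq_mul_sq_div_mul_normG2, add_assoc, add_sub_cancel]
  have hfactor : ((i : ℝ) + 1) * (i + α) / lam i ^ 2 ≤ α / css ^ 2 := by
    rw [hlam, ← neg_sq css]
    exact mul_add_div_sq_le (Nat.cast_nonneg i) hα₁.le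
      (add_one_le_Gamma_add_div_Gamma (Nat.cast_nonneg i) hα₁.le)
  rw [Real.norm_eq_abs, hterm, abs_mul, abs_of_nonneg (by positivity)]
  exact mul_le_mul_of_nonneg_right hfactor (abs_nonneg _)

theorem stmt13 (α β css : ℝ)
    (hα₁ : 1 < α) (hα₂ : α < 2) (hβ₁ : α - 1 ≤ β) (hβ₂ : β ≤ 1)
    (hcss : css = Real.sin (Real.pi * α) /
      (Real.sin (Real.pi * (α - β)) + Real.sin (Real.pi * β)))
    (f lam c : ℕ → ℝ)
    (hlam : ∀ i : ℕ, lam i = -css * (Real.Gamma ((i : ℝ) + 1 + α) / Real.Gamma ((i : ℝ) + 1)))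
    (hc : ∀ i : ℕ, c i = f i / (lam i * normG2 β (α - β) i))
    (hf : Summable fun i : ℕ => (f i) ^ 2 / normG2 β (α - β) i) :
    Summable fun i : ℕ =>
      ((i : ℝ) + 1) ^ 2 * (c i) ^ 2 * normG2 (α - β - 1) (β - 1) (i + 1) :=
  stmt13_general α β css hα₁ f lam c hlam hc hf
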